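/- Let g = 2k+1 with k ≥ 6, and let a be a complex number with a ≠ 0 and a ≠ 1. With the parameter choice a_{i,1} = i·a and a_{i,2} = i for i = 1, …, g−1, the 5×5 complex matrix whose columns are indexed by the pairs (i,j) ∈ {(2,k+1), (3,k+1), (k+1,g−2), (k+1,g−1), (k−1,k+2)} and whose rows consist of the five quantities ν_{ij,1}(a_{k+1,1}), ν'_{ij,1}(a_{k+1,1}), ν_{ij,2}(a_{k+1,2}), ν'_{ij,2}(a_{k+1,2}), τ_{ij,k+1} is invertible. -/

import Mathlib

open Polynomial Finset

/-- `A_h = ∏_{i=1}^{g-1} a_{i,h}`. -/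
noncomputable def Aprod (g : ℕ) (a : ℕ → ℕ → ℂ) (h : ℕ) : ℂ :=
  ∏ i ∈ Finset.Icc 1 (g - 1), a i h

/-- `d_2 = 1`, `d_1 = -A_1/A_2`. -/
noncomputable def dcoef (g : ℕ) (a : ℕ → ℕ → ℂ) (h : ℕ) : ℂ :=
  if h = 1 then -Aprod g a 1 / Aprod g a 2 else 1

/-- The polynomial `α_{i,h}`: for `1 ≤ i ≤ k = ⌊g/2⌋`,
`α_{i,h}(t) = t·∏_{r≠i}(t − a_{r,h})`; for `k+1 ≤ i ≤ g−1`,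
`α_{i,h}(t) = −(d_h a_{i,h}/A_h)·∏_{r≠i}(t − a_{r,h})`. -/
noncomputable def alphaPoly (g : ℕ) (a : ℕ → ℕ → ℂ) (i h : ℕ) : Polynomial ℂ :=
  if i ≤ g / 2 then
    X * ∏ r ∈ (Finset.Icc 1 (g - 1)).erase i, (X - C (a r h))
  else
    C (-(dcoef g a h * a i h / Aprod g a h)) *
      ∏ r ∈ (Finset.Icc 1 (g - 1)).erase i, (X - C (a r h))

/-- Wronskian `ν_{ij,h} = α_{i,h} α'_{j,h} − α_{j,h} α'_{i,h}`. -/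
noncomputable def nuPoly (g : ℕ) (a : ℕ → ℕ → ℂ) (i j h : ℕ) : Polynomial ℂ :=
  alphaPoly g a i h * derivative (alphaPoly g a j h)
    - alphaPoly g a j h * derivative (alphaPoly g a i h)

/-- Torsion values: for `1 ≤ m ≤ g` (with the convention `a_{g,h} = 0`),
`τ_{ij,m} = α'_{j,1}(a_{m,1})·α'_{i,2}(a_{m,2}) − α'_{i,1}(a_{m,1})·α'_{j,2}(a_{m,2})`;
for `m = g+1`, `τ_{ij,g+1} = c_{j,1}c_{i,2} − c_{i,1}c_{j,2}` where `c_{i,h}` is the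
coefficient of `t^{g-2}` in `α_{i,h}`. -/
noncomputable def tauVal (g : ℕ) (a : ℕ → ℕ → ℂ) (i j m : ℕ) : ℂ :=
  if m ≤ g then
    (derivative (alphaPoly g a j 1)).eval (if m = g then 0 else a m 1) *
        (derivative (alphaPoly g a i 2)).eval (if m = g then 0 else a m 2)
      - (derivative (alphaPoly g a i 1)).eval (if m = g then 0 else a m 1) *
        (derivative (alphaPoly g a j 2)).eval (if m = g then 0 else a m 2)
  else
    (alphaPoly g a j 1).coeff (g - 2) * (alphaPoly g a i 2).coeff (g - 2)
      - (alphaPoly g a i 1).coeff (g - 2) * (alphaPoly g a j 2).coeff (g - 2)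

/-- The `(5g−5) × ((g−1)(g−2)/2)` Gaussian matrix: the column indexed by the pair
`(i,j)`, `1 ≤ i < j ≤ g−1`, consists of the `2g−3` coefficients of `ν_{ij,1}`, the
`2g−3` coefficients of `ν_{ij,2}`, and then `τ_{ij,1}, …, τ_{ij,g+1}`. -/
noncomputable def gaussMatrix (g : ℕ) (a : ℕ → ℕ → ℂ) :
    Matrix (Fin (5 * g - 5))
      {p : Fin g × Fin g // 1 ≤ (p.1 : ℕ) ∧ (p.1 : ℕ) < (p.2 : ℕ)} ℂ :=
  fun r p =>
    if (r : ℕ) < 2 * g - 3 then (nuPoly g a (p.1.1 : ℕ) (p.1.2 : ℕ) 1).coeff (r : ℕ)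
    else if (r : ℕ) < 2 * (2 * g - 3) then
      (nuPoly g a (p.1.1 : ℕ) (p.1.2 : ℕ) 2).coeff ((r : ℕ) - (2 * g - 3))
    else tauVal g a (p.1.1 : ℕ) (p.1.2 : ℕ) ((r : ℕ) - 2 * (2 * g - 3) + 1)

/-- The parameters `a_{1,h}, …, a_{g−1,h}` (`h = 1,2`) are nonzero and pairwise
distinct. -/
def validParams (g : ℕ) (a : ℕ → ℕ → ℂ) : Prop :=
  ∀ h, h = 1 ∨ h = 2 →
    (∀ i ∈ Finset.Icc 1 (g - 1), a i h ≠ 0) ∧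
      ∀ i ∈ Finset.Icc 1 (g - 1), ∀ j ∈ Finset.Icc 1 (g - 1), i ≠ j → a i h ≠ a j h

/-- The parameter choice `a_{i,1} = i·a`, `a_{i,2} = i`. -/
noncomputable def aAP (a : ℂ) : ℕ → ℕ → ℂ := fun i h =>
  if h = 1 then (i : ℂ) * a else (i : ℂ)

/-!
For the parameters `a_{i,1} = i·a`, `a_{i,2} = i` the first curve is the second one rescaled
by `a`: `α_{i,1}(a t) = ε_i a^{g-1} α_{i,2}(t)` with `ε_i = 1` for `i ≤ k` and `ε_i = -1` for
`i > k`. So the two `ν`-rows at `a_{k+1,1}` are the two `ν`-rows at `a_{k+1,2}` multiplied by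
`ε_i ε_j a^{2g-3}` and `ε_i ε_j a^{2g-4}`, i.e. by `-` on the columns `(i, k+1)` and `+` on the
columns `(k+1, j)`. In the column `(k-1, k+2)` both `α`'s vanish at `P_{k+1}`, so only its
torsion entry survives, and it is nonzero because `ε_{k-1} ≠ ε_{k+2}`. Row operations leave
that entry times `4 a^{2g-3} a^{2g-4}` times two `2 × 2` minors `ν ν' - ν' ν` of the second
curve at `z = k+1`. If `α_i = (t - z)(t - a_n) T` and `α_n = (t - z)(t - a_i) T'` with `T'` a
constant multiple of `T`, such a minor is `2 α_{k+1}(z)^2 W(α_i/(t - z), α_n/(t - z))(z)`, a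
nonzero multiple of `(a_i - a_n) α_{k+1}(z)^2 T(z)^2`.
-/

theorem Matrix.det_fin_five_of_scaled_rows {R : Type*} [CommRing R]
    (M : Matrix (Fin 5) (Fin 5) R) (A B : R)
    (hA : ∀ c, M 0 c = ![-A, -A, A, A, -A] c * M 2 c)
    (hB : ∀ c, M 1 c = ![-B, -B, B, B, -B] c * M 3 c) (h₂ : M 2 4 = 0) (h₃ : M 3 4 = 0) :
    M.det = 4 * A * B * M 4 4 * (M 2 0 * M 3 1 - M 2 1 * M 3 0) *
      (M 2 2 * M 3 3 - M 2 3 * M 3 2) := by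
  have hM : M = !![-A * M 2 0, -A * M 2 1, A * M 2 2, A * M 2 3, 0;
      -B * M 3 0, -B * M 3 1, B * M 3 2, B * M 3 3, 0;
      M 2 0, M 2 1, M 2 2, M 2 3, 0;
      M 3 0, M 3 1, M 3 2, M 3 3, 0;
      M 4 0, M 4 1, M 4 2, M 4 3, M 4 4] := by
    ext r c
    fin_cases r <;> fin_cases c <;> simp [hA, hB, h₂, h₃]
  conv_lhs => rw [hM]
  simp [Matrix.det_succ_row_zero, Fin.sum_univ_succ, Fin.succAbove]
  ring

namespace Polynomial

variable {R : Type*} [CommRing R]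

theorem wronskian_mul_mul_left (T f g : R[X]) :
    wronskian (T * f) (T * g) = T ^ 2 * wronskian f g := by
  simp only [wronskian, derivative_mul]; ring

theorem wronskian_C_mul_C_mul (u v : R) (f g : R[X]) :
    wronskian (C u * f) (C v * g) = C (u * v) * wronskian f g := by
  simp only [wronskian, derivative_mul, derivative_C, C_mul]; ring

theorem wronskian_X_sub_C_X_sub_C (x y : R) :
    wronskian (X - C x) (X - C y) = C (y - x) := by
  simp only [wronskian, derivative_sub, derivative_X, derivative_C, C_sub]; ring

theorem wronskian_comp_C_mul_X (u v s : R) (f g : R[X]) :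
    wronskian (C u * f.comp (C s * X)) (C v * g.comp (C s * X)) =
      C (u * v * s) * (wronskian f g).comp (C s * X) := by
  simp only [wronskian, derivative_mul, derivative_C, derivative_comp, derivative_X, mul_comp,
    sub_comp, C_mul]
  ring

theorem eval_wronskian_X_sub_C_mul_X_sub_C_mul (z : R) (B₁ B₂ : R[X]) :
    eval z (wronskian ((X - C z) * B₁) ((X - C z) * B₂)) = 0 ∧
      eval z (derivative (wronskian ((X - C z) * B₁) ((X - C z) * B₂))) = 0 := by
  rw [wronskian_mul_mul_left]
  simp [derivative_mul, pow_two]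

theorem wronskian_minor_X_sub_C_mul (z : R) (B₁ B₂ p : R[X]) :
    eval z (wronskian ((X - C z) * B₁) p) * eval z (derivative (wronskian ((X - C z) * B₂) p)) -
        eval z (wronskian ((X - C z) * B₂) p) *
          eval z (derivative (wronskian ((X - C z) * B₁) p)) =
      2 * eval z p ^ 2 * eval z (wronskian B₁ B₂) := by
  simp [wronskian, derivative_mul]; ring

theorem wronskian_prod_erase_prod_erase {ι : Type*} [DecidableEq ι] {s : Finset ι} {i n : ι}
    (hi : i ∈ s) (hn : n ∈ s) (hin : i ≠ n) (c : ι → R) :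
    wronskian (∏ r ∈ s.erase i, (X - C (c r))) (∏ r ∈ s.erase n, (X - C (c r))) =
      C (c i - c n) * (∏ r ∈ (s.erase i).erase n, (X - C (c r))) ^ 2 := by
  rw [← mul_prod_erase _ _ (mem_erase.2 ⟨hin.symm, hn⟩),
    ← mul_prod_erase _ _ (mem_erase.2 ⟨hin, hi⟩), erase_right_comm, mul_comm (X - C (c n)),
    mul_comm (X - C (c i)), wronskian_mul_mul_left, wronskian_X_sub_C_X_sub_C]
  ring

theorem prod_X_sub_C_mul_eq_comp {K ι : Type*} [Field K] (s : Finset ι) (c : ι → K) {a : K}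
    (ha : a ≠ 0) :
    ∏ r ∈ s, (X - C (c r * a)) =
      C (a ^ s.card) * (∏ r ∈ s, (X - C (c r))).comp (C a⁻¹ * X) := by
  have factor (r : ι) : X - C (c r * a) = C a * (X - C (c r)).comp (C a⁻¹ * X) := by
    rw [sub_comp, X_comp, C_comp, mul_sub, ← mul_assoc, ← C_mul, mul_inv_cancel₀ ha, C_1,
      one_mul, C_mul, mul_comm (C a)]
  rw [prod_congr rfl fun r _ => factor r, prod_mul_distrib, prod_const, prod_comp, C_pow]

theorem eval_prod_X_sub_natCast_ne_zero {s : Finset ℕ} {m : ℕ} (hm : m ∉ s) :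
    eval (m : ℂ) (∏ r ∈ s, (X - C (r : ℂ))) ≠ 0 := by
  rw [eval_prod]
  exact prod_ne_zero_iff.2 fun r hr => by
    rw [eval_sub, eval_X, eval_C, sub_ne_zero, Ne, Nat.cast_inj]
    rintro rfl
    exact hm hr

theorem eval_mul_C_mul_comp_C_inv_mul_X {K : Type*} [Field K] {a : K} (ha : a ≠ 0) (c t : K)
    (f : K[X]) : eval (t * a) (C c * f.comp (C a⁻¹ * X)) = c * eval t f := by
  rw [eval_mul, eval_C, eval_comp, eval_mul, eval_C, eval_X, mul_comm t, inv_mul_cancel_left₀ ha]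

theorem eval_mul_derivative_C_mul_comp_C_inv_mul_X {K : Type*} [Field K] {a : K} (ha : a ≠ 0)
    (c t : K) (f : K[X]) :
    eval (t * a) (derivative (C c * f.comp (C a⁻¹ * X))) =
      c * a⁻¹ * eval t (derivative f) := by
  rw [derivative_C_mul, derivative_comp, derivative_C_mul_X, ← mul_assoc, ← C_mul,
    eval_mul_C_mul_comp_C_inv_mul_X ha]

end Polynomial

theorem nuPoly_eq_wronskian (g : ℕ) (a : ℕ → ℕ → ℂ) (i j h : ℕ) :
    nuPoly g a i j h = wronskian (alphaPoly g a i h) (alphaPoly g a j h) := by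
  rw [nuPoly, wronskian]; ring

theorem nuPoly_swap (g : ℕ) (a : ℕ → ℕ → ℂ) (i j h : ℕ) :
    nuPoly g a i j h = -nuPoly g a j i h := by
  rw [nuPoly, nuPoly]; ring

noncomputable def alphaLead (g : ℕ) (a : ℕ → ℕ → ℂ) (i h : ℕ) : ℂ[X] :=
  if i ≤ g / 2 then X else C (-(dcoef g a h * a i h / Aprod g a h))

theorem alphaPoly_eq_alphaLead_mul (g : ℕ) (a : ℕ → ℕ → ℂ) (i h : ℕ) :
    alphaPoly g a i h = alphaLead g a i h * ∏ r ∈ (Icc 1 (g - 1)).erase i, (X - C (a r h)) := by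
  unfold alphaPoly alphaLead
  split_ifs <;> rfl

/-- `α_{i,h} / (t − a_{m,h})`. -/
noncomputable def alphaCofactor (g : ℕ) (a : ℕ → ℕ → ℂ) (i m h : ℕ) : ℂ[X] :=
  alphaLead g a i h * ∏ r ∈ ((Icc 1 (g - 1)).erase m).erase i, (X - C (a r h))

theorem alphaPoly_eq_X_sub_C_mul_alphaCofactor {g : ℕ} {a : ℕ → ℕ → ℂ} {i m : ℕ}
    (h : ℕ) (hm : m ∈ (Icc 1 (g - 1)).erase i) :
    alphaPoly g a i h = (X - C (a m h)) * alphaCofactor g a i m h := by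
  rw [alphaPoly_eq_alphaLead_mul, alphaCofactor, ← mul_prod_erase _ _ hm, erase_right_comm]
  ring

theorem eval_derivative_alphaPoly {g : ℕ} {a : ℕ → ℕ → ℂ} {i m : ℕ} (h : ℕ)
    (hm : m ∈ (Icc 1 (g - 1)).erase i) :
    eval (a m h) (derivative (alphaPoly g a i h)) = eval (a m h) (alphaCofactor g a i m h) := by
  rw [alphaPoly_eq_X_sub_C_mul_alphaCofactor h hm]
  simp [derivative_mul]

theorem eval_nuPoly_of_common_root {g : ℕ} {a : ℕ → ℕ → ℂ} {i j m : ℕ} (h : ℕ)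
    (hi : m ∈ (Icc 1 (g - 1)).erase i) (hj : m ∈ (Icc 1 (g - 1)).erase j) :
    eval (a m h) (nuPoly g a i j h) = 0 ∧ eval (a m h) (derivative (nuPoly g a i j h)) = 0 := by
  rw [nuPoly_eq_wronskian, alphaPoly_eq_X_sub_C_mul_alphaCofactor h hi,
    alphaPoly_eq_X_sub_C_mul_alphaCofactor h hj]
  exact eval_wronskian_X_sub_C_mul_X_sub_C_mul _ _ _

@[simp]
theorem aAP_one (a : ℂ) (i : ℕ) : aAP a i 1 = i * a := rfl

@[simp]
theorem aAP_two (a : ℂ) (i : ℕ) : aAP a i 2 = i := rfl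

theorem Aprod_aAP_two_ne_zero (g : ℕ) (a : ℂ) : Aprod g (aAP a) 2 ≠ 0 :=
  prod_ne_zero_iff.2 fun r hr => by
    rw [aAP_two, Nat.cast_ne_zero]; simp at hr; omega

theorem Aprod_aAP_one (g : ℕ) (a : ℂ) :
    Aprod g (aAP a) 1 = a ^ (g - 1) * Aprod g (aAP a) 2 := by
  simp only [Aprod, aAP_one, aAP_two, prod_mul_distrib, prod_const, Nat.card_Icc,
    Nat.add_sub_cancel, mul_comm]

def alphaSign (g i : ℕ) : ℂ := if i ≤ g / 2 then 1 else -1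

theorem alphaSign_of_le {g i : ℕ} (h : i ≤ g / 2) : alphaSign g i = 1 := if_pos h

theorem alphaSign_of_lt {g i : ℕ} (h : g / 2 < i) : alphaSign g i = -1 := if_neg (not_le.2 h)

theorem alphaPoly_aAP_one {g i : ℕ} {a : ℂ} (ha : a ≠ 0) (hi : 1 ≤ i) (hig : i < g) :
    alphaPoly g (aAP a) i 1 =
      C (alphaSign g i * a ^ (g - 1)) * (alphaPoly g (aAP a) i 2).comp (C a⁻¹ * X) := by
  have hcard : ((Icc 1 (g - 1)).erase i).card = g - 2 := by
    rw [card_erase_of_mem (by simp; omega), Nat.card_Icc]; omega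
  have hprod : ∏ r ∈ (Icc 1 (g - 1)).erase i, (X - C (aAP a r 1)) =
      C (a ^ (g - 2)) *
        (∏ r ∈ (Icc 1 (g - 1)).erase i, (X - C (aAP a r 2))).comp (C a⁻¹ * X) := by
    simp only [aAP_one, aAP_two]
    rw [prod_X_sub_C_mul_eq_comp _ _ ha, hcard]
  have hpow : a ^ (g - 1) = a * a ^ (g - 2) := by rw [← pow_succ']; congr 1; omega
  unfold alphaPoly alphaSign
  split_ifs with hsmall
  · have hX : (X : ℂ[X]) = C a * (C a⁻¹ * X) := by
      rw [← mul_assoc, ← C_mul, mul_inv_cancel₀ ha, C_1, one_mul]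
    rw [hprod, mul_comp, X_comp, hpow, one_mul, C_mul]
    conv_lhs => arg 1; rw [hX]
    ring
  · rw [hprod, mul_comp, C_comp, dcoef, dcoef, if_pos rfl, if_neg (by decide), Aprod_aAP_one, hpow]
    have hA₂ := Aprod_aAP_two_ne_zero g a
    simp only [aAP_one, aAP_two, ← mul_assoc, ← C_mul]
    congr 2
    field_simp

theorem nuPoly_aAP_one {g i j : ℕ} {a : ℂ} (ha : a ≠ 0) (hi : 1 ≤ i) (hig : i < g)
    (hj : 1 ≤ j) (hjg : j < g) :
    nuPoly g (aAP a) i j 1 = C (alphaSign g i * alphaSign g j * a ^ (2 * g - 3)) *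
      (nuPoly g (aAP a) i j 2).comp (C a⁻¹ * X) := by
  have hpow : a ^ (g - 1) * a ^ (g - 1) * a⁻¹ = a ^ (2 * g - 3) := by
    rw [← pow_add, show g - 1 + (g - 1) = 2 * g - 3 + 1 by omega, pow_succ,
      mul_inv_cancel_right₀ ha]
  rw [nuPoly_eq_wronskian, nuPoly_eq_wronskian, alphaPoly_aAP_one ha hi hig,
    alphaPoly_aAP_one ha hj hjg, wronskian_comp_C_mul_X, ← hpow]
  congr 2
  ring

theorem eval_nuPoly_aAP_one {g i j : ℕ} {a : ℂ} (ha : a ≠ 0) (hi : 1 ≤ i) (hig : i < g)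
    (hj : 1 ≤ j) (hjg : j < g) (t : ℂ) :
    eval (t * a) (nuPoly g (aAP a) i j 1) =
      alphaSign g i * alphaSign g j * a ^ (2 * g - 3) * eval t (nuPoly g (aAP a) i j 2) := by
  rw [nuPoly_aAP_one ha hi hig hj hjg, eval_mul_C_mul_comp_C_inv_mul_X ha]

theorem eval_derivative_nuPoly_aAP_one {g i j : ℕ} {a : ℂ} (ha : a ≠ 0) (hi : 1 ≤ i)
    (hig : i < g) (hj : 1 ≤ j) (hjg : j < g) (t : ℂ) :
    eval (t * a) (derivative (nuPoly g (aAP a) i j 1)) =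
      alphaSign g i * alphaSign g j * a ^ (2 * g - 4) *
        eval t (derivative (nuPoly g (aAP a) i j 2)) := by
  have hpow : a ^ (2 * g - 3) * a⁻¹ = a ^ (2 * g - 4) := by
    rw [show 2 * g - 3 = 2 * g - 4 + 1 by omega, pow_succ, mul_inv_cancel_right₀ ha]
  rw [nuPoly_aAP_one ha hi hig hj hjg, eval_mul_derivative_C_mul_comp_C_inv_mul_X ha,
    mul_assoc _ (a ^ _), hpow]

theorem eval_derivative_alphaPoly_aAP_one {g i : ℕ} {a : ℂ} (ha : a ≠ 0) (hi : 1 ≤ i)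
    (hig : i < g) (t : ℂ) :
    eval (t * a) (derivative (alphaPoly g (aAP a) i 1)) =
      alphaSign g i * a ^ (g - 2) * eval t (derivative (alphaPoly g (aAP a) i 2)) := by
  have hpow : a ^ (g - 1) * a⁻¹ = a ^ (g - 2) := by
    rw [show g - 1 = g - 2 + 1 by omega, pow_succ, mul_inv_cancel_right₀ ha]
  rw [alphaPoly_aAP_one ha hi hig, eval_mul_derivative_C_mul_comp_C_inv_mul_X ha,
    mul_assoc _ (a ^ _), hpow]

theorem tauVal_aAP {g i j m : ℕ} {a : ℂ} (ha : a ≠ 0) (hi : 1 ≤ i) (hig : i < g)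
    (hj : 1 ≤ j) (hjg : j < g) (hmg : m < g) :
    tauVal g (aAP a) i j m = (alphaSign g j - alphaSign g i) * a ^ (g - 2) *
      eval (m : ℂ) (derivative (alphaPoly g (aAP a) i 2)) *
        eval (m : ℂ) (derivative (alphaPoly g (aAP a) j 2)) := by
  rw [tauVal, if_pos hmg.le, if_neg hmg.ne, if_neg hmg.ne, aAP_one, aAP_two,
    eval_derivative_alphaPoly_aAP_one ha hi hig, eval_derivative_alphaPoly_aAP_one ha hj hjg]
  ring

theorem eval_alphaLead_aAP_two_ne_zero {g i : ℕ} (a : ℂ) (hi : i ≠ 0) {x : ℂ}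
    (hx : x ≠ 0) : eval x (alphaLead g (aAP a) i 2) ≠ 0 := by
  have hi0 : (i : ℂ) ≠ 0 := Nat.cast_ne_zero.2 hi
  unfold alphaLead
  split_ifs
  · rwa [eval_X]
  · rw [eval_C, dcoef, if_neg (by decide), aAP_two]
    exact neg_ne_zero.2 (div_ne_zero (by rwa [one_mul]) (Aprod_aAP_two_ne_zero g a))

theorem eval_alphaPoly_aAP_two_ne_zero {g m : ℕ} (a : ℂ) (hm : m ≠ 0) :
    eval (m : ℂ) (alphaPoly g (aAP a) m 2) ≠ 0 := by
  rw [alphaPoly_eq_alphaLead_mul, eval_mul]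
  simp only [aAP_two]
  exact mul_ne_zero (eval_alphaLead_aAP_two_ne_zero a hm (Nat.cast_ne_zero.2 hm))
    (eval_prod_X_sub_natCast_ne_zero (notMem_erase m _))

theorem eval_alphaCofactor_aAP_two_ne_zero {g i m : ℕ} (a : ℂ) (hm : m ≠ 0) (hi : i ≠ 0) :
    eval (m : ℂ) (alphaCofactor g (aAP a) i m 2) ≠ 0 := by
  rw [alphaCofactor, eval_mul]
  simp only [aAP_two]
  exact mul_ne_zero (eval_alphaLead_aAP_two_ne_zero a hi (Nat.cast_ne_zero.2 hm))
    (eval_prod_X_sub_natCast_ne_zero (by simp))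

theorem eval_wronskian_alphaCofactor_aAP_two_ne_zero {g i n m : ℕ} (a : ℂ)
    (hm : m ≠ 0) (hi : i ∈ (Icc 1 (g - 1)).erase m)
    (hn : n ∈ (Icc 1 (g - 1)).erase m) (hin : i ≠ n) (hside : i ≤ g / 2 ↔ n ≤ g / 2) :
    eval (m : ℂ) (wronskian (alphaCofactor g (aAP a) i m 2) (alphaCofactor g (aAP a) n m 2)) ≠
      0 := by
  have hQ := eval_prod_X_sub_natCast_ne_zero (s := (((Icc 1 (g - 1)).erase m).erase i).erase n)
    (m := m) (by simp)
  have hin' : (i : ℂ) - n ≠ 0 := sub_ne_zero.2 (Nat.cast_injective.ne hin)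
  have hm0 : (m : ℂ) ≠ 0 := Nat.cast_ne_zero.2 hm
  simp only [alphaCofactor, alphaLead, aAP_two]
  by_cases hsmall : i ≤ g / 2
  · rw [if_pos hsmall, if_pos (hside.1 hsmall), wronskian_mul_mul_left,
      wronskian_prod_erase_prod_erase hi hn hin]
    simp only [eval_mul, eval_pow, eval_X, eval_C]
    exact mul_ne_zero (pow_ne_zero _ hm0) (mul_ne_zero hin' (pow_ne_zero _ hQ))
  · rw [if_neg hsmall, if_neg (mt hside.2 hsmall), wronskian_C_mul_C_mul,
      wronskian_prod_erase_prod_erase hi hn hin]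
    have hui := eval_alphaLead_aAP_two_ne_zero (g := g) (i := i) a (by simp at hi; omega) hm0
    have hun := eval_alphaLead_aAP_two_ne_zero (g := g) (i := n) a (by simp at hn; omega) hm0
    rw [alphaLead, if_neg hsmall, eval_C, aAP_two] at hui
    rw [alphaLead, if_neg (mt hside.2 hsmall), eval_C, aAP_two] at hun
    simp only [eval_mul, eval_pow, eval_C]
    exact mul_ne_zero (mul_ne_zero hui hun) (mul_ne_zero hin' (pow_ne_zero _ hQ))

theorem minor_nuPoly_aAP_two_ne_zero {g i n m : ℕ} (a : ℂ)
    (hm : m ∈ Icc 1 (g - 1)) (hi : i ∈ (Icc 1 (g - 1)).erase m)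
    (hn : n ∈ (Icc 1 (g - 1)).erase m) (hin : i ≠ n) (hside : i ≤ g / 2 ↔ n ≤ g / 2) :
    eval (m : ℂ) (nuPoly g (aAP a) i m 2) * eval (m : ℂ) (derivative (nuPoly g (aAP a) n m 2)) -
        eval (m : ℂ) (nuPoly g (aAP a) n m 2) *
          eval (m : ℂ) (derivative (nuPoly g (aAP a) i m 2)) ≠ 0 := by
  have hmi : m ∈ (Icc 1 (g - 1)).erase i := mem_erase.2 ⟨(ne_of_mem_erase hi).symm, hm⟩
  have hmn : m ∈ (Icc 1 (g - 1)).erase n := mem_erase.2 ⟨(ne_of_mem_erase hn).symm, hm⟩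
  have hm0 : m ≠ 0 := by simp at hm; omega
  rw [nuPoly_eq_wronskian, nuPoly_eq_wronskian, alphaPoly_eq_X_sub_C_mul_alphaCofactor 2 hmi,
    alphaPoly_eq_X_sub_C_mul_alphaCofactor 2 hmn, aAP_two, wronskian_minor_X_sub_C_mul]
  exact mul_ne_zero (mul_ne_zero two_ne_zero (pow_ne_zero _ (eval_alphaPoly_aAP_two_ne_zero a hm0)))
    (eval_wronskian_alphaCofactor_aAP_two_ne_zero a hm0 hi hn hin hside)

theorem tauVal_aAP_ne_zero {g i j m : ℕ} {a : ℂ} (ha : a ≠ 0) (hm : m ∈ Icc 1 (g - 1))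
    (hi : i ∈ (Icc 1 (g - 1)).erase m) (hj : j ∈ (Icc 1 (g - 1)).erase m) (hig : i ≤ g / 2)
    (hjg : g / 2 < j) : tauVal g (aAP a) i j m ≠ 0 := by
  have hmi : m ∈ (Icc 1 (g - 1)).erase i := mem_erase.2 ⟨(ne_of_mem_erase hi).symm, hm⟩
  have hmj : m ∈ (Icc 1 (g - 1)).erase j := mem_erase.2 ⟨(ne_of_mem_erase hj).symm, hm⟩
  simp only [mem_erase, mem_Icc] at hm hi hj
  rw [tauVal_aAP ha hi.2.1 (by omega) hj.2.1 (by omega) (by omega), alphaSign_of_le hig,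
    alphaSign_of_lt hjg, ← aAP_two a m, eval_derivative_alphaPoly 2 hmi,
    eval_derivative_alphaPoly 2 hmj]
  exact mul_ne_zero (mul_ne_zero (mul_ne_zero (by norm_num) (pow_ne_zero _ ha))
    (eval_alphaCofactor_aAP_two_ne_zero a (by omega) (by omega)))
    (eval_alphaCofactor_aAP_two_ne_zero a (by omega) (by omega))

theorem odd_case_five_by_five_isUnit_general (g k : ℕ) (hgk : g = 2 * k + 1) (hk : 6 ≤ k)
    (a : ℂ) (ha0 : a ≠ 0) :
    IsUnit (Matrix.of fun (r c : Fin 5) =>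
      (fun (i j : ℕ) =>
        ![(nuPoly g (aAP a) i j 1).eval (((k : ℂ) + 1) * a),
          (Polynomial.derivative (nuPoly g (aAP a) i j 1)).eval (((k : ℂ) + 1) * a),
          (nuPoly g (aAP a) i j 2).eval ((k : ℂ) + 1),
          (Polynomial.derivative (nuPoly g (aAP a) i j 2)).eval ((k : ℂ) + 1),
          tauVal g (aAP a) i j (k + 1)] r)
      ((![(2, k + 1), (3, k + 1), (k + 1, g - 2), (k + 1, g - 1), (k - 1, k + 2)] :
          Fin 5 → ℕ × ℕ) c).1
      ((![(2, k + 1), (3, k + 1), (k + 1, g - 2), (k + 1, g - 1), (k - 1, k + 2)] :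
          Fin 5 → ℕ × ℕ) c).2) := by
  subst hgk
  have hvanish := eval_nuPoly_of_common_root (g := 2 * k + 1) (a := aAP a) (i := k - 1)
    (j := k + 2) (m := k + 1) 2 (by simp; omega) (by simp; omega)
  simp only [aAP_two, Nat.cast_add, Nat.cast_one] at hvanish
  have hτ : tauVal (2 * k + 1) (aAP a) (k - 1) (k + 2) (k + 1) ≠ 0 :=
    tauVal_aAP_ne_zero ha0 (by simp; omega) (by simp; omega) (by simp; omega) (by omega)
      (by omega)
  have hminor₁ := minor_nuPoly_aAP_two_ne_zero a (g := 2 * k + 1) (m := k + 1) (i := 2) (n := 3)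
    (by simp; omega) (by simp; omega) (by simp; omega) (by omega) (by omega)
  have hminor₂ := minor_nuPoly_aAP_two_ne_zero a (g := 2 * k + 1) (m := k + 1) (i := 2 * k - 1)
    (n := 2 * k) (by simp; omega) (by simp; omega) (by simp; omega) (by omega) (by omega)
  push_cast at hminor₁ hminor₂
  rw [Matrix.isUnit_iff_isUnit_det, isUnit_iff_ne_zero,
    Matrix.det_fin_five_of_scaled_rows _ (a ^ (2 * (2 * k + 1) - 3)) (a ^ (2 * (2 * k + 1) - 4))]
  · simp [ha0, hτ, hminor₁, hminor₂, nuPoly_swap _ _ (k + 1)]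
  · intro c
    fin_cases c <;>
      simp (disch := omega) [eval_nuPoly_aAP_one ha0, alphaSign_of_le, alphaSign_of_lt]
  · intro c
    fin_cases c <;>
      simp (disch := omega) [eval_derivative_nuPoly_aAP_one ha0, alphaSign_of_le, alphaSign_of_lt]
  · simpa using hvanish.1
  · simpa using hvanish.2

/-- Let `g = 2k+1` with `k ≥ 6`, and let `a ∈ ℂ`, `a ≠ 0`, `a ≠ 1`.
With `a_{i,1} = i·a`, `a_{i,2} = i`, the 5×5 matrix whose columns are indexed by the
pairs `(2,k+1), (3,k+1), (k+1,g−2), (k+1,g−1), (k−1,k+2)` and whose rows are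
`ν_{ij,1}(a_{k+1,1}), ν'_{ij,1}(a_{k+1,1}), ν_{ij,2}(a_{k+1,2}), ν'_{ij,2}(a_{k+1,2}), τ_{ij,k+1}`
is invertible. -/
theorem odd_case_five_by_five_isUnit (g k : ℕ) (hgk : g = 2 * k + 1) (hk : 6 ≤ k)
    (a : ℂ) (ha0 : a ≠ 0) (ha1 : a ≠ 1) :
    IsUnit (Matrix.of fun (r c : Fin 5) =>
      (fun (i j : ℕ) =>
        ![(nuPoly g (aAP a) i j 1).eval (((k : ℂ) + 1) * a),
          (Polynomial.derivative (nuPoly g (aAP a) i j 1)).eval (((k : ℂ) + 1) * a),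
          (nuPoly g (aAP a) i j 2).eval ((k : ℂ) + 1),
          (Polynomial.derivative (nuPoly g (aAP a) i j 2)).eval ((k : ℂ) + 1),
          tauVal g (aAP a) i j (k + 1)] r)
      ((![(2, k + 1), (3, k + 1), (k + 1, g - 2), (k + 1, g - 1), (k - 1, k + 2)] :
          Fin 5 → ℕ × ℕ) c).1
      ((![(2, k + 1), (3, k + 1), (k + 1, g - 2), (k + 1, g - 1), (k - 1, k + 2)] :
          Fin 5 → ℕ × ℕ) c).2) :=
  odd_case_five_by_five_isUnit_general g k hgk hk a ha0
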